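/- Completeness invariant: let f be a filtering function (contractant and solution-preserving) and suppose at each tree node with divisible filtered store S^f, children are the stores S^f[d_j/d_{ji}] obtained from a complete splitting of a selected component. Then for every solution R with R ≺ₛ S^f at some node, there exists a child of that node whose filtered store S' satisfies R ⪯ₛ S'. -/

import Mathlib

theorem exists_le_update_of_iUnion_eq {ι κ α : Type*} [DecidableEq ι] {S R : ι → Set α}
    {j : ι} {d : κ → Set α} (hd : ⋃ i, d i = S j) (hRS : R ≤ S) {x : α} (hx : R j = {x}) :
    ∃ i, R ≤ Function.update S j (d i) := by
  have hxS : x ∈ ⋃ i, d i := hd ▸ hRS j (hx ▸ rfl)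
  obtain ⟨i, hxi⟩ := Set.mem_iUnion.1 hxS
  exact ⟨i, le_update_iff.2 ⟨hx ▸ Set.singleton_subset_iff.2 hxi, fun m _ => hRS m⟩⟩

theorem completeness_invariant_general
    (n k : ℕ) (α : Type*)
    (Sol : Set (Fin n → Set α))
    (f : (Fin n → Set α) → (Fin n → Set α))
    (hpres : ∀ S, ∀ R ∈ Sol, (∀ m, R m ⊆ S m) → (∀ m, R m ⊆ f S m))
    (hsolform : ∀ R ∈ Sol, ∀ m, ∃ x, R m = {x})
    (Sf : Fin n → Set α) (j : Fin n)
    (d : Fin k → Set α)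
    (hcomplete : (⋃ i, d i) = Sf j)
    (R : Fin n → Set α) (hR : R ∈ Sol)
    (hlt : (∀ m, R m ⊆ Sf m) ∧ R ≠ Sf) :
    ∃ i, ∀ m, R m ⊆ f (Function.update Sf j (d i)) m := by
  obtain ⟨x, hx⟩ := hsolform R hR j
  obtain ⟨i, hi⟩ := exists_le_update_of_iUnion_eq hcomplete hlt.1 hx
  exact ⟨i, hpres _ R hR hi⟩

/-- Completeness invariant: let `f` be a filtering function (contractant
and solution-preserving), and suppose at a node the divisible filtered
store `Sf` is split on component `j` into parts `d i` whose union is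
`Sf j` (completeness); the children are the filtered stores
`f (Sf[d_j/d i])`. Then every solution `R` strictly below `Sf` is below
the filtered store of some child. -/
theorem completeness_invariant
    (n k : ℕ) (α : Type*)
    (Sol : Set (Fin n → Set α))
    (f : (Fin n → Set α) → (Fin n → Set α))
    (hcontr : ∀ S, ∀ m, f S m ⊆ S m)
    (hpres : ∀ S, ∀ R ∈ Sol, (∀ m, R m ⊆ S m) → (∀ m, R m ⊆ f S m))
    (hsolform : ∀ R ∈ Sol, ∀ m, ∃ x, R m = {x})
    (Sf : Fin n → Set α) (j : Fin n)
    (d : Fin k → Set α)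
    (hcomplete : (⋃ i, d i) = Sf j)
    (R : Fin n → Set α) (hR : R ∈ Sol)
    (hlt : (∀ m, R m ⊆ Sf m) ∧ R ≠ Sf) :
    ∃ i, ∀ m, R m ⊆ f (Function.update Sf j (d i)) m :=
  completeness_invariant_general n k α Sol f hpres hsolform Sf j d hcomplete R hR hlt
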